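/- arXiv:2311.13590 — 2 statements merged into one kernel-verified Lean document; each statement's English description precedes it below -/
import Mathlib

section
/- Let G be a simple graph, M a triangle-free 2-matching, and P an M-augmenting amenable path (an alternating path of odd length starting and ending with non-M edges at vertices unsaturated in M). Then M ⊕ P is a triangle-free 2-matching with |M ⊕ P| = |M| + 1. -/
open SimpleGraph
open scoped symmDiff

def deg {V : Type*} [DecidableEq V] (M : Finset (Sym2 V)) (v : V) : ℕ :=
  (M.filter (fun e => v ∈ e)).card

def Is2Matching {V : Type*} [DecidableEq V] (M : Finset (Sym2 V)) : Prop :=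
  ∀ v, deg M v ≤ 2

def TriFree {V : Type*} (M : Finset (Sym2 V)) : Prop :=
  ∀ a b c : V, a ≠ b → b ≠ c → a ≠ c →
    ¬ (s(a,b) ∈ M ∧ s(b,c) ∈ M ∧ s(a,c) ∈ M)

def AltList {V : Type*} (M : Finset (Sym2 V)) (P : List (Sym2 V)) : Prop :=
  P.Chain' (fun e f => e ∈ M ↔ f ∉ M)

def Consecutive {V : Type*} (P : List (Sym2 V)) (e f : Sym2 V) : Prop :=
  ∃ i : ℕ, (P[i]? = some e ∧ P[i+1]? = some f) ∨
       (P[i]? = some f ∧ P[i+1]? = some e)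

def AmenableOn {V : Type*} [DecidableEq V] (G : SimpleGraph V)
    (M : Finset (Sym2 V)) (P : List (Sym2 V)) : Prop :=
  ∀ a b c : V, a ≠ b → b ≠ c → a ≠ c →
    G.Adj a b → G.Adj b c → G.Adj a c →
    s(a,b) ∈ M ∪ P.toFinset → s(b,c) ∈ M ∪ P.toFinset → s(a,c) ∈ M ∪ P.toFinset →
    ∃ e f : Sym2 V, e ∈ ({s(a,b), s(b,c), s(a,c)} : Set (Sym2 V)) ∧
      f ∈ ({s(a,b), s(b,c), s(a,c)} : Set (Sym2 V)) ∧ e ≠ f ∧ Consecutive P e f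

section Aux

variable {V : Type*} [DecidableEq V] {M : Finset (Sym2 V)}

/-- In an alternating list starting with a non-M edge, twice the number of M-edges
plus (length mod 2) equals the length. -/
theorem alt_count : ∀ (l : List (Sym2 V)), AltList M l →
    (∀ e, l.head? = some e → e ∉ M) →
    2 * l.countP (fun e => decide (e ∈ M)) + l.length % 2 = l.length
  | [], _, _ => by simp
  | [a], _, hh => by simp [List.countP_cons, hh a rfl]
  | a :: b :: rest, hc, hh => by
    have h1 := List.isChain_cons_cons.mp hc
    have ha : a ∉ M := hh a rfl
    have hb : b ∈ M := by by_contra hb; exact ha (h1.1.mpr hb)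
    have hc' : AltList M rest := h1.2.tail
    have hh' : ∀ e, rest.head? = some e → e ∉ M := by
      intro e he
      cases rest with
      | nil => simp at he
      | cons c r =>
        simp at he
        subst he
        have h2 := (List.isChain_cons_cons.mp h1.2).1
        exact fun hcM => (h2.mp hb) hcM
    have ih := alt_count rest hc' hh'
    have da : decide (a ∈ M) = false := decide_eq_false ha
    have db : decide (b ∈ M) = true := decide_eq_true hb
    simp [List.countP_cons, da, db]
    omega

/-- The key degree-counting lemma along an alternating walk of odd length
starting (hence ending) with non-M edges. -/
theorem walk_count {G : SimpleGraph V} {u t : V} (q : G.Walk u t)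
    (hc : AltList M q.edges) (ho : Odd q.length)
    (hh : ∀ e, q.edges.head? = some e → e ∉ M) (v : V) :
    q.edges.countP (fun e => decide (v ∈ e ∧ e ∉ M)) =
      q.edges.countP (fun e => decide (v ∈ e ∧ e ∈ M)) +
        ((if v = u then 1 else 0) + (if v = t then 1 else 0)) := by
  match q with
  | .nil => simp at ho
  | .cons (v := w) h (.nil) =>
    -- single edge s(u, t), with w = t
    have ha : s(u, w) ∉ M := hh _ (by simp)
    have hne : u ≠ w := h.ne
    simp only [Walk.edges_cons, Walk.edges_nil, List.countP_cons, List.countP_nil,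
      ha, Sym2.mem_iff, decide_eq_true_eq]
    rcases eq_or_ne v u with rfl | hu <;> rcases eq_or_ne v w with rfl | hw <;>
      simp_all
  | .cons (v := w) h (.cons (v := x) h' q') =>
    have ha : s(u, w) ∉ M := hh _ (by simp)
    rw [Walk.edges_cons, Walk.edges_cons] at hc
    have h1 := List.isChain_cons_cons.mp hc
    have hb : s(w, x) ∈ M := by
      by_contra hb; exact ha (h1.1.mpr hb)
    have hc' : AltList M q'.edges := h1.2.tail
    have hh' : ∀ e, q'.edges.head? = some e → e ∉ M := by
      intro e he
      cases hE : q'.edges with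
      | nil => rw [hE] at he; simp at he
      | cons c r =>
        rw [hE] at he
        simp at he
        subst he
        have h2 := h1.2
        rw [hE] at h2
        exact fun hcM => ((List.isChain_cons_cons.mp h2).1.mp hb) hcM
    have ho' : Odd q'.length := by
      rw [Nat.odd_iff] at ho ⊢
      simp only [Walk.length_cons] at ho
      omega
    have ih := walk_count q' hc' ho' hh' v
    have hne1 : u ≠ w := h.ne
    have hne2 : w ≠ x := h'.ne
    simp only [Walk.edges_cons, List.countP_cons, ha, hb, Sym2.mem_iff,
      decide_eq_true_eq]
    rw [ih]
    rcases eq_or_ne v u with rfl | hu <;> rcases eq_or_ne v w with rfl | hw <;>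
      rcases eq_or_ne v x with rfl | hx <;> rcases eq_or_ne v t with rfl | ht <;>
      simp_all <;> omega

theorem chain'_rel {l : List (Sym2 V)} (hc : AltList M l) {i : ℕ} {e f : Sym2 V}
    (he : l[i]? = some e) (hf : l[i+1]? = some f) : e ∈ M ↔ f ∉ M := by
  rw [AltList, List.Chain', List.isChain_iff_getElem] at hc
  obtain ⟨h2, rfl⟩ := List.getElem?_eq_some_iff.mp hf
  obtain ⟨h1, rfl⟩ := List.getElem?_eq_some_iff.mp he
  exact hc i (by omega)

end Aux

theorem stmt1 {V : Type*} [DecidableEq V] (G : SimpleGraph V)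
    (M : Finset (Sym2 V)) (hME : ∀ e ∈ M, e ∈ G.edgeSet)
    (hM2 : Is2Matching M) (hMtf : TriFree M)
    {s t : V} (hst : s ≠ t) (p : G.Walk s t) (hTrail : p.IsTrail)
    (hAlt : AltList M p.edges)
    (hOdd : Odd p.length)
    (hfirst : ∀ e, p.edges.head? = some e → e ∉ M)
    (hlast : ∀ e, p.edges.getLast? = some e → e ∉ M)
    (hs : deg M s < 2) (ht : deg M t < 2)
    (hAm : AmenableOn G M p.edges) :
    Is2Matching (M ∆ p.edges.toFinset) ∧ TriFree (M ∆ p.edges.toFinset) ∧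
      (M ∆ p.edges.toFinset).card = M.card + 1 := by
  set l := p.edges with hl
  set P := l.toFinset with hP
  have hnd : l.Nodup := hTrail.edges_nodup
  have hlenP : Odd l.length := by rw [hl, p.length_edges]; exact hOdd
  -- generic conversion: finset-filter cards are list counts
  have hfc : ∀ (q : Sym2 V → Prop) [DecidablePred q],
      (P.filter q).card = l.countP (fun e => decide (q e)) := by
    intro q _
    have h1 : P.filter q = (l.filter (fun e => decide (q e))).toFinset := by
      ext e
      simp [hP, List.mem_filter]
    rw [h1, List.toFinset_card_of_nodup (hnd.filter _), List.countP_eq_length_filter]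
  -- cardinality
  have hMPcard : (M ∩ P).card = l.countP (fun e => decide (e ∈ M)) := by
    have : M ∩ P = P.filter (fun e => e ∈ M) := by
      ext e; simp [Finset.mem_filter, and_comm]
    rw [this, hfc]
  have hcnt := alt_count l hAlt hfirst
  have hPcard : P.card = l.length := List.toFinset_card_of_nodup hnd
  have hsymm : M ∆ P = (M \ P) ∪ (P \ M) := by
    rw [symmDiff_def]; rfl
  have hdisj : Disjoint (M \ P) (P \ M) := disjoint_sdiff_sdiff
  have hMsd : (M \ P).card = M.card - (M ∩ P).card := by
    rw [← Finset.sdiff_inter_self_left M P,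
      Finset.card_sdiff_of_subset Finset.inter_subset_left]
  have hPsd : (P \ M).card = P.card - (M ∩ P).card := by
    rw [← Finset.sdiff_inter_self_left P M,
      Finset.card_sdiff_of_subset Finset.inter_subset_left, Finset.inter_comm]
  have hle1 : (M ∩ P).card ≤ M.card := Finset.card_le_card Finset.inter_subset_left
  have hle2 : (M ∩ P).card ≤ P.card := Finset.card_le_card Finset.inter_subset_right
  have hcard : (M ∆ P).card = M.card + 1 := by
    rw [hsymm, Finset.card_union_of_disjoint hdisj, hMsd, hPsd]
    rw [Nat.odd_iff] at hlenP
    omega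
  -- triangle-free
  have htf : TriFree (M ∆ P) := by
    intro a b c hab hbc hac ⟨h1, h2, h3⟩
    have hsub : ∀ e, e ∈ M ∆ P → e ∈ M ∪ P := by
      intro e he
      rw [Finset.mem_symmDiff] at he
      rcases he with ⟨h, _⟩ | ⟨h, _⟩
      · exact Finset.mem_union_left _ h
      · exact Finset.mem_union_right _ h
    have hadj : ∀ e, e ∈ M ∪ P → e ∈ G.edgeSet := by
      intro e he
      rcases Finset.mem_union.mp he with h | h
      · exact hME e h
      · exact p.edges_subset_edgeSet (List.mem_toFinset.mp h)
    have hadj1 : G.Adj a b := (SimpleGraph.mem_edgeSet G).mp (hadj _ (hsub _ h1))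
    have hadj2 : G.Adj b c := (SimpleGraph.mem_edgeSet G).mp (hadj _ (hsub _ h2))
    have hadj3 : G.Adj a c := (SimpleGraph.mem_edgeSet G).mp (hadj _ (hsub _ h3))
    obtain ⟨e, f, he, hf, hef, i, hi⟩ :=
      hAm a b c hab hbc hac hadj1 hadj2 hadj3 (hsub _ h1) (hsub _ h2) (hsub _ h3)
    have hmemMP : ∀ z, z ∈ ({s(a,b), s(b,c), s(a,c)} : Set (Sym2 V)) → z ∈ M ∆ P := by
      rintro z hz
      simp only [Set.mem_insert_iff, Set.mem_singleton_iff] at hz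
      rcases hz with rfl | rfl | rfl <;> assumption
    have key : ∀ x y : Sym2 V, l[i]? = some x → l[i+1]? = some y →
        x ∈ M ∆ P → y ∈ M ∆ P → False := by
      intro x y hx hy hxMP hyMP
      have hR := chain'_rel hAlt hx hy
      have hxl : x ∈ P := List.mem_toFinset.mpr (List.mem_of_getElem? hx)
      have hyl : y ∈ P := List.mem_toFinset.mpr (List.mem_of_getElem? hy)
      rw [Finset.mem_symmDiff] at hxMP hyMP
      by_cases hxM : x ∈ M
      · tauto
      · have hyM : y ∈ M := by
          by_contra hyM
          exact hxM (hR.mpr hyM)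
        tauto
    rcases hi with ⟨hx, hy⟩ | ⟨hx, hy⟩
    · exact key e f hx hy (hmemMP _ he) (hmemMP _ hf)
    · exact key f e hx hy (hmemMP _ hf) (hmemMP _ he)
  -- 2-matching
  have h2m : Is2Matching (M ∆ P) := by
    intro v
    set A := M.filter (fun e => v ∈ e) with hA
    set B := P.filter (fun e => v ∈ e) with hB
    have hfilt : (M ∆ P).filter (fun e => v ∈ e) = A ∆ B := by
      ext e
      simp only [Finset.mem_filter, Finset.mem_symmDiff, hA, hB]
      tauto
    have hABi : (A ∩ B).card = l.countP (fun e => decide (v ∈ e ∧ e ∈ M)) := by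
      have : A ∩ B = P.filter (fun e => v ∈ e ∧ e ∈ M) := by
        ext e
        simp only [Finset.mem_inter, Finset.mem_filter, hA, hB]
        tauto
      rw [this, hfc]
    have hBA : (B \ A).card = l.countP (fun e => decide (v ∈ e ∧ e ∉ M)) := by
      have : B \ A = P.filter (fun e => v ∈ e ∧ e ∉ M) := by
        ext e
        simp only [Finset.mem_sdiff, Finset.mem_filter, hA, hB]
        tauto
      rw [this, hfc]
    have hwc := walk_count p hAlt hOdd hfirst v
    rw [← hl] at hwc
    have hAB : (A \ B).card = A.card - (A ∩ B).card := by
      rw [← Finset.sdiff_inter_self_left A B,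
        Finset.card_sdiff_of_subset Finset.inter_subset_left]
    have hABle : (A ∩ B).card ≤ A.card := Finset.card_le_card Finset.inter_subset_left
    have hAcard : A.card = deg M v := rfl
    have hdc : deg (M ∆ P) v = (A \ B).card + (B \ A).card := by
      rw [deg, hfilt, symmDiff_def]
      exact Finset.card_union_of_disjoint disjoint_sdiff_sdiff
    have hMv : deg M v ≤ 2 := hM2 v
    rw [hdc, hAB, hBA, hwc, ← hABi]
    rcases eq_or_ne v s with rfl | hvs
    · rcases eq_or_ne v t with rfl | hvt
      · exact absurd rfl hst
      · rw [if_pos rfl, if_neg hvt]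
        omega
    · rcases eq_or_ne v t with rfl | hvt
      · rw [if_neg hvs, if_pos rfl]
        omega
      · rw [if_neg hvs, if_neg hvt]
        omega
  exact ⟨h2m, htf, hcard⟩
end

section
/- Let M be a 2-matching and P an M-augmenting path: an M-alternating trail of odd length whose first and last edges are not in M and whose two distinct endpoints are unsaturated in M. Then M ⊕ P is a 2-matching and |M ⊕ P| = |M| + 1. -/
open SimpleGraph
open scoped symmDiff

lemma deg_insert {V : Type*} [DecidableEq V] (M : Finset (Sym2 V)) (e : Sym2 V)
    (he : e ∉ M) (v : V) :
    deg (insert e M) v = deg M v + if v ∈ e then 1 else 0 := by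
  unfold deg
  rw [Finset.filter_insert]
  split
  · rw [Finset.card_insert_of_notMem (by simp [he])]
  · simp

lemma deg_erase {V : Type*} [DecidableEq V] (M : Finset (Sym2 V)) (e : Sym2 V)
    (he : e ∈ M) (v : V) :
    deg (M.erase e) v + (if v ∈ e then 1 else 0) = deg M v := by
  unfold deg
  rw [Finset.filter_erase]
  split
  · rename_i h
    rw [Finset.card_erase_add_one (Finset.mem_filter.2 ⟨he, h⟩)]
  · rw [Finset.erase_eq_of_notMem (by simp_all), Nat.add_zero]

lemma altlist_congr {V : Type*} {M M' : Finset (Sym2 V)} :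
    ∀ (l : List (Sym2 V)), (∀ e ∈ l, (e ∈ M ↔ e ∈ M')) → AltList M l → AltList M' l := by
  intro l
  induction l with
  | nil => intro _ _; simp [AltList, List.Chain']
  | cons a l ih =>
    cases l with
    | nil => intro _ _; simp [AltList, List.Chain']
    | cons b l =>
      intro h hc
      simp only [AltList, List.Chain', List.isChain_cons_cons] at hc ⊢
      refine ⟨?_, ih (fun e he => h e (List.mem_cons_of_mem _ he)) hc.2⟩
      have ha := h a (by simp)
      have hb := h b (by simp)
      rw [← ha, ← hb]
      exact hc.1

lemma symmdiff_step {V : Type*} [DecidableEq V] (M : Finset (Sym2 V))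
    (e1 e2 : Sym2 V) (S : Finset (Sym2 V)) (he1M : e1 ∉ M) (he2M : e2 ∈ M)
    (h12 : e1 ≠ e2) (h1S : e1 ∉ S) (h2S : e2 ∉ S) :
    M ∆ (insert e1 (insert e2 S)) = (insert e1 (M.erase e2)) ∆ S := by
  ext x
  simp only [Finset.mem_symmDiff, Finset.mem_insert, Finset.mem_erase]
  by_cases hx1 : x = e1 <;> by_cases hx2 : x = e2 <;> subst_vars <;> tauto

lemma aux_main {V : Type*} [DecidableEq V] (G : SimpleGraph V) :
    ∀ (n : ℕ) (M : Finset (Sym2 V)), Is2Matching M → ∀ (s t : V) (p : G.Walk s t),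
      p.length = n → p.IsTrail → AltList M p.edges →
      (∀ e, p.edges.head? = some e → e ∉ M) →
      (∀ e, p.edges.getLast? = some e → e ∉ M) →
      deg M s < 2 → deg M t < 2 → (s = t → deg M s = 0) → Odd n →
      Is2Matching (M ∆ p.edges.toFinset) ∧ (M ∆ p.edges.toFinset).card = M.card + 1 := by
  intro n
  induction n using Nat.strong_induction_on with
  | _ n ih =>
    intro M hM2 s t p hlen hTrail hAlt hfirst hlast hs ht hstdeg hOdd
    cases p with
    | nil =>
      simp only [Walk.length_nil] at hlen
      rw [← hlen] at hOdd
      exact absurd hOdd (by decide)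
    | cons h q =>
      rename_i b
      cases q with
      | nil =>
        -- base case: single edge s(s,t), here b = t
        have he1M : s(s, t) ∉ M := hfirst _ (by simp)
        have hset : M ∆ (Walk.cons h Walk.nil).edges.toFinset = insert s(s, t) M := by
          ext x
          simp only [Walk.edges_cons, Walk.edges_nil, List.toFinset_cons, List.toFinset_nil,
            LawfulSingleton.insert_empty_eq, Finset.mem_symmDiff, Finset.mem_insert, Finset.mem_singleton]
          by_cases hx : x = s(s, t) <;> subst_vars <;> tauto
        rw [hset]
        constructor
        · intro v
          rw [deg_insert M _ he1M v]
          by_cases hv : v ∈ s(s, t)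
          · rcases Sym2.mem_iff.1 hv with rfl | rfl
            · simp [hv]; omega
            · simp [hv]; omega
          · simp [hv]; exact hM2 v
        · rw [Finset.card_insert_of_notMem he1M]
      | cons h' r =>
        rename_i c
        -- step: p = cons h (cons h' r), h : G.Adj s b, h' : G.Adj b c, r : G.Walk c t
        set e1 : Sym2 V := s(s, b) with he1def
        set e2 : Sym2 V := s(b, c) with he2def
        have hedges : (Walk.cons h (Walk.cons h' r)).edges = e1 :: e2 :: r.edges := by
          simp [Walk.edges_cons, he1def, he2def]
        have hnd := hTrail.edges_nodup
        rw [hedges] at hnd hAlt hfirst hlast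
        have h12 : e1 ≠ e2 := by simp at hnd; tauto
        have h1r : e1 ∉ r.edges := by simp at hnd; tauto
        have h2r : e2 ∉ r.edges := by simp at hnd; tauto
        have he1M : e1 ∉ M := hfirst e1 rfl
        simp only [AltList, List.Chain', List.isChain_cons_cons] at hAlt
        have he2M : e2 ∈ M := by
          by_contra hc2
          exact hfirst e1 rfl (hAlt.1.2 hc2)
        -- length facts
        have hlen2 : r.length + 2 = n := by simpa using hlen
        have hOddr : Odd r.length := by
          rw [Nat.odd_iff] at hOdd ⊢; omega
        have hrne : r.edges ≠ [] := by
          intro hnil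
          have := r.length_edges
          rw [hnil] at this
          simp at this
          rw [Nat.odd_iff] at hOddr; omega
        obtain ⟨f, rest, hre⟩ : ∃ f rest, r.edges = f :: rest := by
          cases hcase : r.edges with
          | nil => exact absurd hcase hrne
          | cons f rest => exact ⟨f, rest, rfl⟩
        set M' : Finset (Sym2 V) := insert e1 (M.erase e2) with hM'def
        have h1e : e1 ∉ M.erase e2 := fun hh => he1M (Finset.mem_of_mem_erase hh)
        have hMM' : ∀ e ∈ r.edges, (e ∈ M ↔ e ∈ M') := by
          intro e he
          have hne1 : e ≠ e1 := fun hh => h1r (hh ▸ he)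
          have hne2 : e ≠ e2 := fun hh => h2r (hh ▸ he)
          simp [hM'def, Finset.mem_insert, Finset.mem_erase, hne1, hne2]
        rw [List.isChain_cons] at hAlt
        have hAltr : AltList M' r.edges := altlist_congr _ hMM' hAlt.2.2
        have hfM : f ∉ M := by
          have := hAlt.2.1 f (by rw [hre]; rfl)
          exact this.1 he2M
        have hfirst' : ∀ e, r.edges.head? = some e → e ∉ M' := by
          intro e hee
          rw [hre] at hee
          simp at hee
          subst hee
          exact fun hh => hfM ((hMM' f (by rw [hre]; simp)).2 hh)
        have hlast' : ∀ e, r.edges.getLast? = some e → e ∉ M' := by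
          intro e hee
          have heM : e ∉ M := by
            apply hlast
            rw [hre] at hee ⊢
            rw [List.getLast?_cons_cons]
            exact hee
          have her : e ∈ r.edges := by
            obtain ⟨hne, heq⟩ := List.mem_getLast?_eq_getLast (Option.mem_def.2 hee)
            rw [heq]
            exact List.getLast_mem hne
          exact fun hh => heM ((hMM' e her).2 hh)
        -- degree arithmetic
        have hdeg : ∀ v, deg M' v + (if v ∈ e2 then 1 else 0)
            = deg M v + (if v ∈ e1 then 1 else 0) := by
          intro v
          rw [hM'def, deg_insert _ _ h1e v]
          have h2 := deg_erase M e2 he2M v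
          omega
        have hsb : s ≠ b := h.ne
        have hbc : b ≠ c := h'.ne
        have hbe2 : b ∈ e2 := Sym2.mem_iff.2 (Or.inl rfl)
        have hce2 : c ∈ e2 := Sym2.mem_iff.2 (Or.inr rfl)
        have hM'2 : Is2Matching M' := by
          intro v
          have hd := hdeg v
          have hM2v := hM2 v
          by_cases hv2 : v ∈ e2
          · by_cases hv1 : v ∈ e1 <;> simp [hv1, hv2] at hd <;> omega
          · by_cases hv1 : v ∈ e1
            · simp [hv1, hv2] at hd
              rcases Sym2.mem_iff.1 hv1 with rfl | rfl
              · omega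
              · exact absurd hbe2 hv2
            · simp [hv1, hv2] at hd; omega
        have hs' : deg M' c < 2 := by
          have hd := hdeg c
          by_cases hc1 : c ∈ e1
          · rcases Sym2.mem_iff.1 hc1 with rfl | rfl
            · simp [hc1, hce2] at hd; omega
            · exact absurd rfl hbc
          · simp [hc1, hce2] at hd
            have := hM2 c
            omega
        have ht' : deg M' t < 2 := by
          have hd := hdeg t
          by_cases ht1 : t ∈ e1
          · rcases Sym2.mem_iff.1 ht1 with rfl | rfl
            · have h0 := hstdeg rfl
              by_cases hs2 : t ∈ e2 <;> simp [ht1, hs2] at hd <;> omega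
            · simp [ht1, hbe2] at hd; omega
          · by_cases ht2 : t ∈ e2 <;> simp [ht1, ht2] at hd <;> omega
        have hct : c = t → deg M' c = 0 := by
          intro hceqt
          have hd := hdeg c
          by_cases hc1 : c ∈ e1
          · rcases Sym2.mem_iff.1 hc1 with hcs | hcb
            · have h0 : deg M s = 0 := hstdeg (by rw [← hcs, hceqt])
              have h0' : deg M c = 0 := by rw [hcs]; exact h0
              simp [hc1, hce2] at hd; omega
            · exact absurd hcb.symm hbc
          · have htc : deg M c < 2 := by rw [hceqt]; exact ht
            simp [hc1, hce2] at hd; omega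
        have hcard' : M'.card = M.card := by
          rw [hM'def, Finset.card_insert_of_notMem h1e, Finset.card_erase_of_mem he2M]
          have : 1 ≤ M.card := Finset.card_pos.2 ⟨e2, he2M⟩
          omega
        have key := ih r.length (by omega) M' hM'2 c t r rfl (hTrail.of_cons.of_cons)
          hAltr hfirst' hlast' hs' ht' hct hOddr
        have hsd : M ∆ (Walk.cons h (Walk.cons h' r)).edges.toFinset
            = M' ∆ r.edges.toFinset := by
          rw [hedges]
          simp only [List.toFinset_cons]
          exact symmdiff_step M e1 e2 r.edges.toFinset he1M he2M h12
            (by simp [h1r]) (by simp [h2r])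
        rw [hsd, ← hcard']
        exact key


theorem stmt11 {V : Type*} [DecidableEq V] (G : SimpleGraph V)
    (M : Finset (Sym2 V)) (hME : ∀ e ∈ M, e ∈ G.edgeSet)
    (hM2 : Is2Matching M)
    {s t : V} (hst : s ≠ t) (p : G.Walk s t) (hTrail : p.IsTrail)
    (hAlt : AltList M p.edges)
    (hOdd : Odd p.length)
    (hfirst : ∀ e, p.edges.head? = some e → e ∉ M)
    (hlast : ∀ e, p.edges.getLast? = some e → e ∉ M)
    (hs : deg M s < 2) (ht : deg M t < 2) :
    Is2Matching (M ∆ p.edges.toFinset) ∧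
      (M ∆ p.edges.toFinset).card = M.card + 1 := by
  exact aux_main G p.length M hM2 s t p rfl hTrail hAlt hfirst hlast hs ht
    (fun h => absurd h hst) hOdd
end
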